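/- arXiv:2408.15529 — 4 statements merged into one kernel-verified Lean document; each statement's English description precedes it below -/
import Mathlib

section
/- Given a complex number w, among all pairs of complex numbers (V, M) satisfying (V - iM)(V* - iM*) = w, the pair with V = Re(√w) and M = -Im(√w) (both real) minimizes |M|. -/
open Complex

lemma sqrt_mul_self' (w : ℂ) : (w ^ (1/2 : ℂ)) * (w ^ (1/2 : ℂ)) = w := by
  by_cases hw : w = 0
  · simp [hw, Complex.zero_cpow (by norm_num : (1/2 : ℂ) ≠ 0)]
  · rw [← Complex.cpow_add _ _ hw]
    norm_num

/-- Given `w : ℂ`, among all pairs `(V, M)` of complex numbers satisfying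
`(V - iM)(V* - iM*) = w`, the pair `V = Re(√w)`, `M = -Im(√w)` (both real)
satisfies the constraint and minimizes `|M|`. -/
theorem stmt_0 (w : ℂ) :
    ((((w ^ (1/2 : ℂ)).re : ℂ) - Complex.I * ((-(w ^ (1/2 : ℂ)).im : ℝ) : ℂ)) *
        ((starRingEnd ℂ) (((w ^ (1/2 : ℂ)).re : ℝ) : ℂ) -
          Complex.I * (starRingEnd ℂ) (((-(w ^ (1/2 : ℂ)).im : ℝ) : ℂ))) = w) ∧
    ∀ V M : ℂ,
      (V - Complex.I * M) * ((starRingEnd ℂ) V - Complex.I * (starRingEnd ℂ) M) = w →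
      ‖(((-(w ^ (1/2 : ℂ)).im : ℝ) : ℂ))‖ ≤ ‖M‖ := by
  set s := w ^ (1/2 : ℂ) with hsdef
  have hs : s * s = w := sqrt_mul_self' w
  have h1 : ((s.re : ℂ) - Complex.I * ((-s.im : ℝ) : ℂ)) = s := by
    push_cast
    rw [show (s.re : ℂ) - Complex.I * (-(s.im : ℂ)) = (s.re : ℂ) + (s.im : ℂ) * Complex.I by ring]
    exact Complex.re_add_im s
  constructor
  · have h2 : ((starRingEnd ℂ) ((s.re : ℝ) : ℂ) -
        Complex.I * (starRingEnd ℂ) (((-s.im : ℝ) : ℂ))) = s := by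
      rw [Complex.conj_ofReal, Complex.conj_ofReal]
      exact h1
    rw [h1, h2, hs]
  · intro V M h
    have hc : (V - Complex.I * M) * (starRingEnd ℂ) (V + Complex.I * M) = w := by
      rw [map_add, map_mul, Complex.conj_I]
      rw [← h]; ring
    set p := V - Complex.I * M with hp
    set q := V + Complex.I * M with hq
    have hwre : w.re = s.re ^ 2 - s.im ^ 2 := by
      rw [← hs]; simp [Complex.mul_re]; ring
    have hwabs : ‖w‖ = s.re ^ 2 + s.im ^ 2 := by
      rw [← hs, norm_mul, ← sq, Complex.sq_norm, Complex.normSq_apply]; ring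
    have habspq : ‖w‖ = ‖p‖ * ‖q‖ := by
      rw [← hc, norm_mul, Complex.norm_conj]
    have hre : w.re = (p * (starRingEnd ℂ) q).re := by rw [hc]
    have hns : Complex.normSq (p - q) = Complex.normSq p + Complex.normSq q -
        2 * (p * (starRingEnd ℂ) q).re := Complex.normSq_sub p q
    have hpq : p - q = -2 * (Complex.I * M) := by rw [hp, hq]; ring
    have hns2 : Complex.normSq (p - q) = 4 * Complex.normSq M := by
      rw [hpq]
      simp [Complex.normSq_apply, Complex.mul_re, Complex.mul_im]
      ring
    have hM : Complex.normSq M = ‖M‖ ^ 2 := (Complex.sq_norm M).symm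
    have hp2 : Complex.normSq p = ‖p‖ ^ 2 := (Complex.sq_norm p).symm
    have hq2 : Complex.normSq q = ‖q‖ ^ 2 := (Complex.sq_norm q).symm
    -- key inequality: s.im^2 ≤ |M|^2
    have key : s.im ^ 2 ≤ ‖M‖ ^ 2 := by
      nlinarith [sq_nonneg (‖p‖ - ‖q‖), norm_nonneg p,
        norm_nonneg q]
    have : ‖(((-s.im : ℝ) : ℂ))‖ = |s.im| := by
      rw [Complex.norm_real, Real.norm_eq_abs, abs_neg]
    rw [this]
    nlinarith [abs_nonneg s.im, _root_.sq_abs s.im, norm_nonneg M]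
end

section
/- If every eigenvalue of a complex n×n matrix X has strictly negative real part, then every eigenvalue of X ⊗ I + I ⊗ conj(X) has strictly negative real part. -/
open Matrix Module
open scoped Kronecker

lemma mem_spec_iff_aux {m : Type*} [Fintype m] [DecidableEq m] (M : Matrix m m ℂ) (μ : ℂ) :
    μ ∈ spectrum ℂ M ↔ ∃ v, v ≠ 0 ∧ M.mulVec v = μ • v := by
  rw [← AlgEquiv.spectrum_eq (Matrix.toLinAlgEquiv' (n := m) (R := ℂ)),
    ← Module.End.hasEigenvalue_iff_mem_spectrum]
  constructor
  · intro h
    obtain ⟨v, hv⟩ := h.exists_hasEigenvector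
    refine ⟨v, hv.2, ?_⟩
    have := hv.apply_eq_smul
    simpa [Matrix.toLinAlgEquiv'_apply] using this
  · rintro ⟨v, hv0, hv⟩
    exact Module.End.hasEigenvalue_of_hasEigenvector
      ⟨Module.End.mem_eigenspace_iff.2 (by simpa [Matrix.toLinAlgEquiv'_apply] using hv), hv0⟩

/-- If every eigenvalue of a complex `n × n` matrix `X` has strictly negative real part,
then every eigenvalue of `X ⊗ I + I ⊗ conj X` has strictly negative real part. -/
theorem stmt_8 {n : ℕ} (X : Matrix (Fin n) (Fin n) ℂ)
    (hX : ∀ μ ∈ spectrum ℂ X, μ.re < 0) :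
    ∀ μ ∈ spectrum ℂ (X ⊗ₖ (1 : Matrix (Fin n) (Fin n) ℂ) +
        (1 : Matrix (Fin n) (Fin n) ℂ) ⊗ₖ X.map (starRingEnd ℂ)), μ.re < 0 := by
  intro μ hμ
  set B : Matrix (Fin n) (Fin n) ℂ := X.map (starRingEnd ℂ) with hB
  set M : Matrix (Fin n × Fin n) (Fin n × Fin n) ℂ :=
    X ⊗ₖ (1 : Matrix (Fin n) (Fin n) ℂ) + (1 : Matrix (Fin n) (Fin n) ℂ) ⊗ₖ B with hM
  obtain ⟨v, hv0, hv⟩ := (mem_spec_iff_aux M μ).1 hμ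
  set f : Module.End ℂ (Fin n × Fin n → ℂ) := Matrix.toLin' M with hf
  set g : Module.End ℂ (Fin n × Fin n → ℂ) := Matrix.toLin' (X ⊗ₖ (1 : Matrix (Fin n) (Fin n) ℂ)) with hg
  set E := Module.End.eigenspace f μ with hE
  have hvE : v ∈ E := Module.End.mem_eigenspace_iff.2 (by simpa [hf, Matrix.toLin'_apply] using hv)
  have hcommM : (X ⊗ₖ (1 : Matrix (Fin n) (Fin n) ℂ)) * M = M * (X ⊗ₖ (1 : Matrix (Fin n) (Fin n) ℂ)) := by
    rw [hM, Matrix.mul_add, Matrix.add_mul]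
    congr 1
    rw [← Matrix.mul_kronecker_mul, ← Matrix.mul_kronecker_mul, Matrix.one_mul, Matrix.mul_one,
      Matrix.mul_one, Matrix.one_mul]
  have hcomm : g ∘ₗ f = f ∘ₗ g := by
    rw [hf, hg, ← Matrix.toLin'_mul, ← Matrix.toLin'_mul, hcommM]
  have hinv : ∀ x ∈ E, g x ∈ E := by
    intro x hx
    rw [hE, Module.End.mem_eigenspace_iff] at hx ⊢
    have : g (f x) = f (g x) := LinearMap.congr_fun hcomm x
    rw [hx, LinearMap.map_smul] at this
    exact this.symm
  haveI : Nontrivial E := nontrivial_of_ne ⟨v, hvE⟩ 0 (by simp [Subtype.ext_iff, hv0])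
  obtain ⟨lam, hlam⟩ := Module.End.exists_eigenvalue (g.restrict hinv)
  obtain ⟨w', hw'⟩ := hlam.exists_hasEigenvector
  have hw0 : (w' : Fin n × Fin n → ℂ) ≠ 0 := by
    simpa [Submodule.coe_eq_zero] using hw'.2
  have hgw : (X ⊗ₖ (1 : Matrix (Fin n) (Fin n) ℂ)).mulVec w' = lam • (w' : Fin n × Fin n → ℂ) := by
    have := congrArg (Subtype.val) hw'.apply_eq_smul
    simpa [hg, Matrix.toLin'_apply, LinearMap.restrict_apply] using this
  have hMw : M.mulVec w' = μ • (w' : Fin n × Fin n → ℂ) := by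
    have := Module.End.mem_eigenspace_iff.1 w'.2
    simpa [hf, Matrix.toLin'_apply] using this
  have hBw : ((1 : Matrix (Fin n) (Fin n) ℂ) ⊗ₖ B).mulVec w' = (μ - lam) • (w' : Fin n × Fin n → ℂ) := by
    have := hMw
    rw [hM, Matrix.add_mulVec, hgw] at this
    funext p
    have h2 := congrFun this p
    simp only [Pi.add_apply, Pi.smul_apply, smul_eq_mul] at h2 ⊢
    ring_nf
    linear_combination h2
  -- pick a nonzero entry
  obtain ⟨p0, hp0⟩ : ∃ p, (w' : Fin n × Fin n → ℂ) p ≠ 0 := by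
    by_contra h
    push_neg at h
    exact hw0 (funext h)
  obtain ⟨i0, j0⟩ := p0
  -- column is an eigenvector of X for lam
  have hcol : X.mulVec (fun k => (w' : Fin n × Fin n → ℂ) (k, j0)) =
      lam • (fun k => (w' : Fin n × Fin n → ℂ) (k, j0)) := by
    funext i
    have := congrFun hgw (i, j0)
    simpa [Matrix.mulVec, dotProduct, Fintype.sum_prod_type, Matrix.one_apply,
      mul_ite, ite_mul, Finset.sum_ite_eq, Finset.sum_ite_eq'] using this
  have hlamX : lam ∈ spectrum ℂ X := by
    refine (mem_spec_iff_aux X lam).2 ⟨_, ?_, hcol⟩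
    intro h
    exact hp0 (congrFun h i0)
  -- row is an eigenvector of B for μ - lam
  have hrow : B.mulVec (fun l => (w' : Fin n × Fin n → ℂ) (i0, l)) =
      (μ - lam) • (fun l => (w' : Fin n × Fin n → ℂ) (i0, l)) := by
    funext j
    have := congrFun hBw (i0, j)
    simpa [Matrix.mulVec, dotProduct, Fintype.sum_prod_type, Matrix.one_apply,
      mul_ite, ite_mul, Finset.sum_ite_eq, Finset.sum_ite_eq'] using this
  have hnuB : (μ - lam) ∈ spectrum ℂ B := by
    refine (mem_spec_iff_aux B (μ - lam)).2 ⟨_, ?_, hrow⟩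
    intro h
    exact hp0 (congrFun h j0)
  -- conjugate: star (μ - lam) ∈ spectrum X
  obtain ⟨u, hu0, hu⟩ := (mem_spec_iff_aux B (μ - lam)).1 hnuB
  have hXu : X.mulVec (fun i => star (u i)) =
      star (μ - lam) • (fun i => star (u i)) := by
    funext i
    have := congrFun hu i
    simp only [Matrix.mulVec, dotProduct, hB, Matrix.map_apply, Pi.smul_apply,
      smul_eq_mul] at this ⊢
    calc ∑ l, X i l * star (u l) = star (∑ l, (starRingEnd ℂ) (X i l) * u l) := by
          simp [star_sum, mul_comm]
      _ = star ((μ - lam) * u i) := by rw [this]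
      _ = star (μ - lam) * star (u i) := by simp [mul_comm]
  have hconj : star (μ - lam) ∈ spectrum ℂ X := by
    refine (mem_spec_iff_aux X _).2 ⟨_, ?_, hXu⟩
    intro h
    obtain ⟨i, hi⟩ : ∃ i, u i ≠ 0 := by
      by_contra hc; push_neg at hc; exact hu0 (funext hc)
    exact hi (by simpa using congrFun h i)
  have h1 := hX _ hlamX
  have h2 := hX _ hconj
  have h2' : (μ - lam).re < 0 := by
    simpa [Complex.sub_re] using h2
  have h3 : (μ - lam).re = μ.re - lam.re := Complex.sub_re μ lam
  linarith
end

section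
/- Consider the real 3×3 matrix A = 2·[[γ_z, 0, ν], [0, -γ_x + γ_z, 0], [-ν, 0, -γ_x]]. If γ_x > γ_z > 0 and ν² > γ_x·γ_z, then every eigenvalue of A has strictly negative real part. -/
open Matrix

/-- For the real `3 × 3` matrix `A = 2 [[γz, 0, ν], [0, -γx+γz, 0], [-ν, 0, -γx]]`,
if `γx > γz > 0` and `ν² > γx γz`, then every eigenvalue of `A` (as a complex matrix)
has strictly negative real part. -/
theorem stmt_9 (γx γz ν : ℝ) (h1 : γz < γx) (h2 : 0 < γz) (h3 : γx * γz < ν ^ 2) :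
    ∀ μ ∈ spectrum ℂ
        (((2 : ℝ) • !![γz, 0, ν; 0, -γx + γz, 0; -ν, 0, -γx]).map (algebraMap ℝ ℂ)),
      μ.re < 0 := by
  intro μ hμ
  rw [spectrum.mem_iff] at hμ
  rw [Matrix.isUnit_iff_isUnit_det, isUnit_iff_ne_zero, not_not] at hμ
  rw [Matrix.det_fin_three] at hμ
  simp [Matrix.algebraMap_matrix_apply, Matrix.smul_apply, Matrix.map_apply] at hμ
  have hfac : (μ - (2*(-γx+γz) : ℝ)) *
      (μ^2 + (2*(γx-γz) : ℝ) * μ + ((4*ν^2 - 4*γx*γz : ℝ))) = 0 := by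
    push_cast
    linear_combination hμ
  rcases mul_eq_zero.mp hfac with h | h
  · have : μ = ((2*(-γx+γz) : ℝ) : ℂ) := by linear_combination h
    rw [this, Complex.ofReal_re]
    nlinarith
  · have hre := congrArg Complex.re h
    have him := congrArg Complex.im h
    simp [Complex.add_re, Complex.add_im, Complex.mul_re, Complex.mul_im, pow_two,
      Complex.ofReal_re, Complex.ofReal_im] at hre him
    by_contra hc
    push_neg at hc

    rcases eq_or_ne μ.im 0 with hy0 | hy0
    · rw [hy0] at hre
      nlinarith
    · have h2x : μ.re * μ.im + μ.im * μ.re + 2*(γx-γz)*μ.im = μ.im * (2*μ.re + 2*(γx-γz)) := by ring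
      rw [h2x] at him
      rcases mul_eq_zero.mp him with h' | h'
      · exact hy0 h'
      · nlinarith
end

section
/- The maximally mixed state ρ = I/2 is a fixed point of L(ρ) = -i[ν σ_y, ρ] + γ_x(σ_x ρ σ_x - ρ) - γ_z(σ_z ρ σ_z - ρ), and under the conditions γ_x > γ_z > 0 and ν² > γ_x γ_z it is the unique fixed point among trace-one 2×2 Hermitian matrices. -/
open Matrix

noncomputable def pauliX : Matrix (Fin 2) (Fin 2) ℂ := !![0, 1; 1, 0]
noncomputable def pauliY : Matrix (Fin 2) (Fin 2) ℂ := !![0, -Complex.I; Complex.I, 0]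
noncomputable def pauliZ : Matrix (Fin 2) (Fin 2) ℂ := !![1, 0; 0, -1]

/-- The quasi-Lindblad generator
`L(ρ) = -i[ν σy, ρ] + γx (σx ρ σx - ρ) - γz (σz ρ σz - ρ)`. -/
noncomputable def quasiLindblad (ν γx γz : ℝ) (ρ : Matrix (Fin 2) (Fin 2) ℂ) :
    Matrix (Fin 2) (Fin 2) ℂ :=
  -Complex.I • ((ν • pauliY) * ρ - ρ * (ν • pauliY))
    + γx • (pauliX * ρ * pauliX - ρ) - γz • (pauliZ * ρ * pauliZ - ρ)

/-- The maximally mixed state `ρ = I/2` is a fixed point of the quasi-Lindblad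
generator `L`, and under the conditions `γx > γz > 0` and `ν² > γx γz` it is the
unique fixed point among trace-one `2 × 2` Hermitian matrices. -/
theorem stmt_11 (ν γx γz : ℝ) :
    quasiLindblad ν γx γz ((2⁻¹ : ℝ) • (1 : Matrix (Fin 2) (Fin 2) ℂ)) = 0 ∧
    (γz < γx → 0 < γz → γx * γz < ν ^ 2 →
      ∀ ρ : Matrix (Fin 2) (Fin 2) ℂ, ρ.IsHermitian → ρ.trace = 1 →
        quasiLindblad ν γx γz ρ = 0 →
        ρ = (2⁻¹ : ℝ) • (1 : Matrix (Fin 2) (Fin 2) ℂ)) := by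
  constructor
  · ext i j
    fin_cases i <;> fin_cases j <;>
      simp [quasiLindblad, pauliX, pauliY, pauliZ, Matrix.mul_apply, Fin.sum_univ_two,
        Matrix.one_apply]
  · intro h1 h2 h3 ρ hH htr hL
    have ha : (starRingEnd ℂ) (ρ 0 0) = ρ 0 0 := hH.apply 0 0
    have hd : (starRingEnd ℂ) (ρ 1 1) = ρ 1 1 := hH.apply 1 1
    have hc : (starRingEnd ℂ) (ρ 0 1) = ρ 1 0 := hH.apply 1 0
    have haim : (ρ 0 0).im = 0 := by
      have h := congrArg Complex.im ha; simp at h; linarith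
    have hdim : (ρ 1 1).im = 0 := by
      have h := congrArg Complex.im hd; simp at h; linarith
    have hcre : (ρ 1 0).re = (ρ 0 1).re := by
      have := congrArg Complex.re hc; simpa using this.symm
    have hcim : (ρ 1 0).im = -(ρ 0 1).im := by
      have := congrArg Complex.im hc; simpa using this.symm
    have htr' : ρ 0 0 + ρ 1 1 = 1 := by rwa [Matrix.trace_fin_two] at htr
    have htrre : (ρ 0 0).re + (ρ 1 1).re = 1 := by
      have := congrArg Complex.re htr'; simpa using this
    have e00 := congrFun (congrFun hL 0) 0
    have e01 := congrFun (congrFun hL 0) 1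
    simp [quasiLindblad, pauliX, pauliY, pauliZ, Matrix.mul_apply, Matrix.vecMul, dotProduct, Fin.sum_univ_two] at e00 e01
    rw [Complex.ext_iff] at e00 e01
    simp at e00 e01
    obtain ⟨e1, -⟩ := e00
    obtain ⟨e2, e3⟩ := e01
    rw [hcre] at e1 e2
    rw [hcim, haim, hdim] at e3
    have hbi : (ρ 0 1).im = 0 := by
      have hne : γz - γx ≠ 0 := sub_ne_zero.mpr (ne_of_lt h1)
      have hkey : (γz - γx) * (ρ 0 1).im = 0 := by linear_combination e3 / 2
      exact (mul_eq_zero.mp hkey).resolve_left hne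
    have hbr : (ρ 0 1).re = 0 := by
      have hne : ν ^ 2 - γx * γz ≠ 0 := ne_of_gt (by linarith)
      have hkey : (ν ^ 2 - γx * γz) * (ρ 0 1).re = 0 := by
        linear_combination (-ν / 2) * e1 + (-γx / 2) * e2
      exact (mul_eq_zero.mp hkey).resolve_left hne
    have hν : ν ≠ 0 := by intro h; rw [h] at h3; nlinarith
    have hs : (ρ 0 0).re = (ρ 1 1).re := by
      have hkey : ν * ((ρ 0 0).re - (ρ 1 1).re) = 0 := by linear_combination e2 - 2 * γz * hbr
      have := (mul_eq_zero.mp hkey).resolve_left hν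
      linarith
    ext i j
    fin_cases i <;> fin_cases j <;>
      simp [Matrix.one_apply, Complex.ext_iff] <;>
      constructor <;> linarith
end
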